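/- arXiv:1810.07995 — 5 statements merged into one kernel-verified Lean document; each statement's English description precedes it below -/
import Mathlib

section
/- Continuity of the Nemytskii operator: if f : Ω × ℝ → ℝ is a Carathéodory function satisfying |f(x, s)| ≤ d(x) + b|s|^{p₁(x)/p₂(x)} for all x ∈ Ω and s ∈ ℝ, where d ∈ L^{p₂(·)}(Ω) with d ≥ 0 and b ≥ 0, then for every u ∈ L^{p₁(·)}(Ω) and every sequence (u_k) in L^{p₁(·)}(Ω) with ‖u_k − u‖_{p₁(·)} → 0, one has ‖f(·, u_k(·)) − f(·, u(·))‖_{p₂(·)} → 0 as k → ∞. -/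
open MeasureTheory Filter

/-- The modular `ρ_{p(·)}(u) = ∫_Ω |u(x)|^{p(x)} dx` of a variable exponent Lebesgue space. -/
noncomputable def vModular {N : ℕ} (Ω : Set (Fin N → ℝ)) (p : (Fin N → ℝ) → ℝ)
    (u : (Fin N → ℝ) → ℝ) : ENNReal :=
  ∫⁻ x in Ω, ENNReal.ofReal (|u x| ^ p x)

/-- The Luxemburg norm `‖u‖_{p(·)} = inf {λ > 0 : ρ_{p(·)}(u/λ) ≤ 1}`. -/
noncomputable def vNorm {N : ℕ} (Ω : Set (Fin N → ℝ)) (p : (Fin N → ℝ) → ℝ)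
    (u : (Fin N → ℝ) → ℝ) : ℝ :=
  sInf {l : ℝ | 0 < l ∧ vModular Ω p (fun x => u x / l) ≤ 1}

/-- `u ∈ L^{p(·)}(Ω)`: a measurable function on `Ω` with finite modular. -/
def MemVLp {N : ℕ} (Ω : Set (Fin N → ℝ)) (p : (Fin N → ℝ) → ℝ)
    (u : (Fin N → ℝ) → ℝ) : Prop :=
  AEMeasurable u (volume.restrict Ω) ∧ vModular Ω p u < ⊤

/-! ### Auxiliary real-power inequalities -/

lemma rpow_le_max_of_le' {l m M p : ℝ} (hl : 0 < l) (hm : m ≤ p) (hM : p ≤ M) :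
    l ^ p ≤ max (l ^ m) (l ^ M) := by
  rcases le_total l 1 with h | h
  · exact le_max_of_le_left (Real.rpow_le_rpow_of_exponent_ge hl h hm)
  · exact le_max_of_le_right (Real.rpow_le_rpow_of_exponent_le h hM)

lemma base_rpow_le' {b p M : ℝ} (hb : 0 ≤ b) (hp : 0 ≤ p) (hM : p ≤ M) :
    b ^ p ≤ (max 1 b) ^ M := by
  calc b ^ p ≤ (max 1 b) ^ p := Real.rpow_le_rpow hb (le_max_right _ _) hp
  _ ≤ (max 1 b) ^ M := Real.rpow_le_rpow_of_exponent_le (le_max_left _ _) hM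

lemma add_rpow_le' {a b p M : ℝ} (ha : 0 ≤ a) (hb : 0 ≤ b) (hp : 0 ≤ p) (hM : p ≤ M) :
    (a + b) ^ p ≤ 2 ^ M * (a ^ p + b ^ p) := by
  have h1 : a + b ≤ 2 * max a b := by
    rcases le_total a b with h | h
    · rw [max_eq_right h]; linarith
    · rw [max_eq_left h]; linarith
  have h4 : (max a b) ^ p ≤ a ^ p + b ^ p := by
    rcases le_total a b with h | h
    · rw [max_eq_right h]; exact le_add_of_nonneg_left (Real.rpow_nonneg ha p)
    · rw [max_eq_left h]; exact le_add_of_nonneg_right (Real.rpow_nonneg hb p)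
  calc (a + b) ^ p ≤ (2 * max a b) ^ p :=
        Real.rpow_le_rpow (by linarith) h1 hp
    _ = 2 ^ p * (max a b) ^ p :=
        Real.mul_rpow (by norm_num) (le_max_of_le_left ha)
    _ ≤ 2 ^ M * (a ^ p + b ^ p) := by
        apply mul_le_mul (Real.rpow_le_rpow_of_exponent_le one_le_two hM) h4
          (Real.rpow_nonneg (le_max_of_le_left ha) p) (Real.rpow_nonneg (by norm_num) M)

lemma add3_rpow_le' {a b c p M : ℝ} (ha : 0 ≤ a) (hb : 0 ≤ b) (hc : 0 ≤ c)
    (hp : 0 ≤ p) (hM : p ≤ M) :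
    (a + b + c) ^ p ≤ 4 ^ M * (a ^ p + b ^ p + c ^ p) := by
  have hM0 : (0:ℝ) ≤ M := le_trans hp hM
  have h1 : (a + b + c) ^ p ≤ 2 ^ M * ((a + b) ^ p + c ^ p) :=
    add_rpow_le' (by linarith) hc hp hM
  have h2 : (a + b) ^ p ≤ 2 ^ M * (a ^ p + b ^ p) := add_rpow_le' ha hb hp hM
  have h44 : (2:ℝ) ^ M * 2 ^ M = 4 ^ M := by
    rw [← Real.mul_rpow (by norm_num) (by norm_num)]; norm_num
  have hap := Real.rpow_nonneg ha p
  have hbp := Real.rpow_nonneg hb p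
  have hcp := Real.rpow_nonneg hc p
  have h24 : (2:ℝ) ^ M ≤ 4 ^ M :=
    Real.rpow_le_rpow (by norm_num) (by norm_num) hM0
  have h2Mnn : (0:ℝ) ≤ 2 ^ M := Real.rpow_nonneg (by norm_num) M
  nlinarith [mul_le_mul_of_nonneg_left h2 h2Mnn]

lemma aemeasurable_abs' {α : Type*} [MeasurableSpace α] {μ : MeasureTheory.Measure α}
    {g : α → ℝ} (hg : AEMeasurable g μ) : AEMeasurable (fun x => |g x|) μ :=
  continuous_abs.measurable.comp_aemeasurable hg

/-! ### Measurability of Carathéodory compositions -/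

lemma measurable_comp_countable_range {α : Type*} [MeasurableSpace α] {F : α → ℝ → ℝ}
    (hF : ∀ s, Measurable fun x => F x s) {g : α → ℝ} (hg : Measurable g)
    (hc : (Set.range g).Countable) : Measurable fun x => F x (g x) := by
  intro B hB
  have : (fun x => F x (g x)) ⁻¹' B =
      ⋃ t ∈ Set.range g, ((g ⁻¹' {t}) ∩ ((fun x => F x t) ⁻¹' B)) := by
    ext x
    simp only [Set.mem_preimage, Set.mem_iUnion, Set.mem_inter_iff, Set.mem_singleton_iff,
      Set.mem_range, exists_prop]
    constructor
    · intro h; exact ⟨g x, ⟨x, rfl⟩, rfl, h⟩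
    · rintro ⟨t, _, rfl, h⟩; exact h
  rw [this]
  exact MeasurableSet.biUnion hc fun t _ => (hg (measurableSet_singleton t)).inter (hF t hB)

lemma aemeasurable_nemytskii {N : ℕ} {Ω : Set (Fin N → ℝ)} (hΩm : MeasurableSet Ω)
    {f : (Fin N → ℝ) → ℝ → ℝ}
    (hfmeas : ∀ s : ℝ, Measurable fun x : Ω => f x.1 s)
    (hfcont : ∀ᵐ x ∂(volume.restrict Ω), Continuous fun s => f x s)
    {v : (Fin N → ℝ) → ℝ} (hv : AEMeasurable v (volume.restrict Ω)) :
    AEMeasurable (fun x => f x (v x)) (volume.restrict Ω) := by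
  set w := hv.mk v with hwdef
  have hw : Measurable w := hv.measurable_mk
  have hvw : v =ᵐ[volume.restrict Ω] w := hv.ae_eq_mk
  have key : AEMeasurable (fun x => f x (w x)) (volume.restrict Ω) := by
    have emb : MeasurableEmbedding ((↑) : Ω → (Fin N → ℝ)) :=
      MeasurableEmbedding.subtype_coe hΩm
    rw [← map_comap_subtype_coe hΩm, emb.aemeasurable_map_iff]
    have hw' : Measurable fun x : Ω => w x.1 := hw.comp measurable_subtype_coe
    have sm : StronglyMeasurable fun x : Ω => w x.1 := hw'.stronglyMeasurable
    have hcont' : ∀ᵐ (x : Ω) ∂(Measure.comap Subtype.val volume),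
        Continuous fun s => f x.1 s := (ae_restrict_iff_subtype hΩm).mp hfcont
    refine aemeasurable_of_tendsto_metrizable_ae' (f := fun n (x : Ω) => f x.1 (sm.approx n x))
      (fun n => ?_) ?_
    · exact (measurable_comp_countable_range (F := fun (x : Ω) s => f x.1 s) hfmeas
        (sm.approx n).measurable ((sm.approx n).finite_range.countable)).aemeasurable
    · filter_upwards [hcont'] with x hx
      exact (hx.tendsto _).comp (sm.tendsto_approx x)
  have heq : (fun x => f x (w x)) =ᵐ[volume.restrict Ω] fun x => f x (v x) :=
    hvw.mono fun x hx => by simp only [hx]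
  exact key.congr heq

/-! ### Modular lemmas -/

lemma modular_div_le {N : ℕ} {Ω : Set (Fin N → ℝ)} {p : (Fin N → ℝ) → ℝ} {m M : ℝ}
    (hm0 : 0 ≤ m)
    (hae : ∀ᵐ x ∂(volume.restrict Ω), m ≤ p x ∧ p x ≤ M)
    (v : (Fin N → ℝ) → ℝ) {c : ℝ} (hc : 0 < c) :
    vModular Ω p (fun x => v x / c) ≤
      ENNReal.ofReal (max (c⁻¹ ^ m) (c⁻¹ ^ M)) * vModular Ω p v := by
  rw [vModular, vModular, ← lintegral_const_mul' _ _ ENNReal.ofReal_ne_top]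
  refine lintegral_mono_ae (hae.mono fun x hx => ?_)
  have h1 : |v x / c| = |v x| * c⁻¹ := by
    rw [abs_div, abs_of_pos hc, div_eq_mul_inv]
  have h2 : (|v x| * c⁻¹) ^ p x = |v x| ^ p x * c⁻¹ ^ p x :=
    Real.mul_rpow (abs_nonneg _) (inv_nonneg.mpr hc.le)
  have h3 : c⁻¹ ^ p x ≤ max (c⁻¹ ^ m) (c⁻¹ ^ M) :=
    rpow_le_max_of_le' (inv_pos.mpr hc) hx.1 hx.2
  have h4 : |v x / c| ^ p x ≤ max (c⁻¹ ^ m) (c⁻¹ ^ M) * |v x| ^ p x := by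
    rw [h1, h2, mul_comm]
    exact mul_le_mul_of_nonneg_right h3 (Real.rpow_nonneg (abs_nonneg _) _)
  calc ENNReal.ofReal (|v x / c| ^ p x)
      ≤ ENNReal.ofReal (max (c⁻¹ ^ m) (c⁻¹ ^ M) * |v x| ^ p x) := ENNReal.ofReal_le_ofReal h4
    _ = ENNReal.ofReal (max (c⁻¹ ^ m) (c⁻¹ ^ M)) * ENNReal.ofReal (|v x| ^ p x) :=
        ENNReal.ofReal_mul (le_max_of_le_left (Real.rpow_nonneg (inv_nonneg.mpr hc.le) _))

lemma modular_le_of_div {N : ℕ} {Ω : Set (Fin N → ℝ)} {p : (Fin N → ℝ) → ℝ} {m M : ℝ}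
    (hm0 : 0 ≤ m)
    (hae : ∀ᵐ x ∂(volume.restrict Ω), m ≤ p x ∧ p x ≤ M)
    (v : (Fin N → ℝ) → ℝ) {c : ℝ} (hc : 0 < c) :
    vModular Ω p v ≤
      ENNReal.ofReal (max (c ^ m) (c ^ M)) * vModular Ω p (fun x => v x / c) := by
  have h := modular_div_le hm0 hae (fun x => v x / c) (c := c⁻¹) (inv_pos.mpr hc)
  have hfun : (fun x => (v x / c) / c⁻¹) = v := by
    funext x; field_simp
  rw [inv_inv, hfun] at h
  exact h

lemma norm_set_nonempty {N : ℕ} {Ω : Set (Fin N → ℝ)} {p : (Fin N → ℝ) → ℝ} {m M : ℝ}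
    (hm0 : 0 < m) (hmM : m ≤ M)
    (hae : ∀ᵐ x ∂(volume.restrict Ω), m ≤ p x ∧ p x ≤ M)
    {v : (Fin N → ℝ) → ℝ} (hv : vModular Ω p v ≠ ⊤) :
    ∃ l : ℝ, 0 < l ∧ vModular Ω p (fun x => v x / l) ≤ 1 := by
  set r := (vModular Ω p v).toReal with hr
  have hr0 : 0 ≤ r := ENNReal.toReal_nonneg
  set l := max 1 (r ^ m⁻¹) with hl
  have hl1 : (1:ℝ) ≤ l := le_max_left _ _
  have hl0 : 0 < l := lt_of_lt_of_le one_pos hl1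
  refine ⟨l, hl0, ?_⟩
  have hrl : r ≤ l ^ m := by
    calc r = (r ^ m⁻¹) ^ m := by
          rw [← Real.rpow_mul hr0, inv_mul_cancel₀ hm0.ne', Real.rpow_one]
      _ ≤ l ^ m := Real.rpow_le_rpow (Real.rpow_nonneg hr0 _) (le_max_right _ _) hm0.le
  have key : vModular Ω p (fun x => v x / l) ≤
      ENNReal.ofReal (max (l⁻¹ ^ m) (l⁻¹ ^ M)) * vModular Ω p v :=
    modular_div_le hm0.le hae v hl0
  have hinv1 : l⁻¹ ≤ 1 := inv_le_one_of_one_le₀ hl1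
  have hinv0 : 0 < l⁻¹ := inv_pos.mpr hl0
  have hmax : max (l⁻¹ ^ m) (l⁻¹ ^ M) = l⁻¹ ^ m :=
    max_eq_left (Real.rpow_le_rpow_of_exponent_ge hinv0 hinv1 hmM)
  have hfin : vModular Ω p v = ENNReal.ofReal r := (ENNReal.ofReal_toReal hv).symm
  rw [hmax, hfin] at key
  refine le_trans key ?_
  rw [← ENNReal.ofReal_mul (Real.rpow_nonneg hinv0.le _)]
  refine le_trans (ENNReal.ofReal_le_ofReal ?_) (by simp : ENNReal.ofReal 1 ≤ 1)
  have : l⁻¹ ^ m = (l ^ m)⁻¹ := Real.inv_rpow hl0.le m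
  rw [this]
  have hlm0 : 0 < l ^ m := Real.rpow_pos_of_pos hl0 m
  calc (l ^ m)⁻¹ * r ≤ (l ^ m)⁻¹ * l ^ m :=
        mul_le_mul_of_nonneg_left hrl (inv_nonneg.mpr hlm0.le)
    _ = 1 := inv_mul_cancel₀ hlm0.ne'

lemma modular_le_one_of_norm_lt {N : ℕ} {Ω : Set (Fin N → ℝ)} {p : (Fin N → ℝ) → ℝ}
    (hae : ∀ᵐ x ∂(volume.restrict Ω), 0 ≤ p x)
    {v : (Fin N → ℝ) → ℝ}
    (hne : ∃ l : ℝ, 0 < l ∧ vModular Ω p (fun x => v x / l) ≤ 1)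
    {lam : ℝ} (h : vNorm Ω p v < lam) :
    vModular Ω p (fun x => v x / lam) ≤ 1 := by
  obtain ⟨l, hl, hllam⟩ := exists_lt_of_csInf_lt hne h
  refine le_trans ?_ hl.2
  refine lintegral_mono_ae (hae.mono fun x hx => ?_)
  refine ENNReal.ofReal_le_ofReal (Real.rpow_le_rpow (abs_nonneg _) ?_ hx)
  rw [abs_div, abs_div, abs_of_pos hl.1, abs_of_pos (lt_trans hl.1 hllam)]
  exact div_le_div_of_nonneg_left (abs_nonneg _) hl.1 hllam.le

lemma norm_nonneg_v {N : ℕ} (Ω : Set (Fin N → ℝ)) (p : (Fin N → ℝ) → ℝ)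
    (v : (Fin N → ℝ) → ℝ) : 0 ≤ vNorm Ω p v :=
  Real.sInf_nonneg fun _ hl => hl.1.le

lemma modular_sub_lt_top {N : ℕ} {Ω : Set (Fin N → ℝ)} {p : (Fin N → ℝ) → ℝ} {M : ℝ}
    (hae : ∀ᵐ x ∂(volume.restrict Ω), 0 ≤ p x ∧ p x ≤ M)
    (hpm : AEMeasurable p (volume.restrict Ω))
    {g h : (Fin N → ℝ) → ℝ}
    (hg : AEMeasurable g (volume.restrict Ω))
    (hgf : vModular Ω p g < ⊤) (hhf : vModular Ω p h < ⊤) :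
    vModular Ω p (fun x => g x - h x) < ⊤ := by
  have e1 : ∫⁻ x in Ω, (ENNReal.ofReal (|g x| ^ p x) + ENNReal.ofReal (|h x| ^ p x)) =
      vModular Ω p g + vModular Ω p h :=
    lintegral_add_left' ((aemeasurable_abs' hg).pow hpm).ennreal_ofReal _
  have key : vModular Ω p (fun x => g x - h x) ≤
      ENNReal.ofReal (2 ^ M) * (vModular Ω p g + vModular Ω p h) := by
    calc vModular Ω p (fun x => g x - h x)
        ≤ ∫⁻ x in Ω, ENNReal.ofReal (2 ^ M) *
            (ENNReal.ofReal (|g x| ^ p x) + ENNReal.ofReal (|h x| ^ p x)) := by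
          refine lintegral_mono_ae (hae.mono fun x hx => ?_)
          have hr : |g x - h x| ^ p x ≤ 2 ^ M * (|g x| ^ p x + |h x| ^ p x) :=
            le_trans (Real.rpow_le_rpow (abs_nonneg _) (abs_sub _ _) hx.1)
              (add_rpow_le' (abs_nonneg _) (abs_nonneg _) hx.1 hx.2)
          calc ENNReal.ofReal (|g x - h x| ^ p x)
              ≤ ENNReal.ofReal (2 ^ M * (|g x| ^ p x + |h x| ^ p x)) :=
                ENNReal.ofReal_le_ofReal hr
            _ = ENNReal.ofReal (2 ^ M) *
                (ENNReal.ofReal (|g x| ^ p x) + ENNReal.ofReal (|h x| ^ p x)) := by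
                rw [ENNReal.ofReal_mul (Real.rpow_nonneg (by norm_num) M),
                  ENNReal.ofReal_add (Real.rpow_nonneg (abs_nonneg _) _)
                    (Real.rpow_nonneg (abs_nonneg _) _)]
      _ = ENNReal.ofReal (2 ^ M) * (vModular Ω p g + vModular Ω p h) := by
          rw [lintegral_const_mul' _ _ ENNReal.ofReal_ne_top, e1]
  exact lt_of_le_of_lt key
    (ENNReal.mul_lt_top ENNReal.ofReal_lt_top (ENNReal.add_lt_top.mpr ⟨hgf, hhf⟩))

set_option maxHeartbeats 1000000 in
/-- Continuity of the Nemytskii operator. -/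
theorem nemytskii_continuous {N : ℕ} (hN : 2 ≤ N)
    (Ω : Set (Fin N → ℝ)) (hΩo : IsOpen Ω) (hΩb : Bornology.IsBounded Ω)
    (hΩconn : IsConnected Ω)
    (p₁ p₂ : (Fin N → ℝ) → ℝ)
    (hp₁c : ContinuousOn p₁ (closure Ω)) (hp₁1 : ∀ x ∈ closure Ω, 1 < p₁ x)
    (hp₂c : ContinuousOn p₂ (closure Ω)) (hp₂1 : ∀ x ∈ closure Ω, 1 < p₂ x)
    (f : (Fin N → ℝ) → ℝ → ℝ)
    (hfmeas : ∀ s : ℝ, Measurable fun x : Ω => f x.1 s)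
    (hfcont : ∀ᵐ x ∂(volume.restrict Ω), Continuous fun s => f x s)
    (d : (Fin N → ℝ) → ℝ) (b : ℝ)
    (hd : MemVLp Ω p₂ d) (hd0 : ∀ x ∈ Ω, 0 ≤ d x) (hb : 0 ≤ b)
    (hgrowth : ∀ x ∈ Ω, ∀ s : ℝ, |f x s| ≤ d x + b * |s| ^ (p₁ x / p₂ x))
    (u : (Fin N → ℝ) → ℝ) (hu : MemVLp Ω p₁ u)
    (uk : ℕ → (Fin N → ℝ) → ℝ) (huk : ∀ k, MemVLp Ω p₁ (uk k))
    (hconv : Tendsto (fun k => vNorm Ω p₁ (fun x => uk k x - u x)) atTop (nhds 0)) :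
    Tendsto (fun k => vNorm Ω p₂ (fun x => f x (uk k x) - f x (u x))) atTop (nhds 0) := by
  classical
  have hΩm : MeasurableSet Ω := hΩo.measurableSet
  -- compactness bounds for the exponents
  have hcc : IsCompact (closure Ω) := hΩb.isCompact_closure
  have hcne : (closure Ω).Nonempty := hΩconn.nonempty.closure
  obtain ⟨x₁, hx₁, hmin₁'⟩ := hcc.exists_isMinOn hcne hp₁c
  obtain ⟨y₁, hy₁, hmax₁'⟩ := hcc.exists_isMaxOn hcne hp₁c
  obtain ⟨x₂, hx₂, hmin₂'⟩ := hcc.exists_isMinOn hcne hp₂c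
  obtain ⟨y₂, hy₂, hmax₂'⟩ := hcc.exists_isMaxOn hcne hp₂c
  have hmin₁ : ∀ y ∈ closure Ω, p₁ x₁ ≤ p₁ y := fun y hy => hmin₁' hy
  have hmax₁ : ∀ y ∈ closure Ω, p₁ y ≤ p₁ y₁ := fun y hy => hmax₁' hy
  have hmin₂ : ∀ y ∈ closure Ω, p₂ x₂ ≤ p₂ y := fun y hy => hmin₂' hy
  have hmax₂ : ∀ y ∈ closure Ω, p₂ y ≤ p₂ y₂ := fun y hy => hmax₂' hy
  set m₁ := p₁ x₁ with hm₁def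
  set M₁ := p₁ y₁ with hM₁def
  set m₂ := p₂ x₂ with hm₂def
  set M₂ := p₂ y₂ with hM₂def
  have hm₁ : 1 < m₁ := hp₁1 _ hx₁
  have hm₂ : 1 < m₂ := hp₂1 _ hx₂
  have hm₁M₁ : m₁ ≤ M₁ := hmin₁ _ hy₁
  have hm₂M₂ : m₂ ≤ M₂ := hmin₂ _ hy₂
  have hM₁0 : (0:ℝ) ≤ M₁ := le_trans (by linarith) hm₁M₁
  have hM₂0 : (0:ℝ) ≤ M₂ := le_trans (by linarith) hm₂M₂
  have haeΩ : ∀ᵐ x ∂(volume.restrict Ω), x ∈ Ω := ae_restrict_mem hΩm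
  have hae₁ : ∀ᵐ x ∂(volume.restrict Ω), m₁ ≤ p₁ x ∧ p₁ x ≤ M₁ :=
    haeΩ.mono fun x hx => ⟨hmin₁ x (subset_closure hx), hmax₁ x (subset_closure hx)⟩
  have hae₂ : ∀ᵐ x ∂(volume.restrict Ω), m₂ ≤ p₂ x ∧ p₂ x ≤ M₂ :=
    haeΩ.mono fun x hx => ⟨hmin₂ x (subset_closure hx), hmax₂ x (subset_closure hx)⟩
  have hp₁m : AEMeasurable p₁ (volume.restrict Ω) :=
    (hp₁c.mono subset_closure).aemeasurable hΩm
  have hp₂m : AEMeasurable p₂ (volume.restrict Ω) :=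
    (hp₂c.mono subset_closure).aemeasurable hΩm
  -- the sequence of differences
  have hvmeas : ∀ k, AEMeasurable (fun x => uk k x - u x) (volume.restrict Ω) :=
    fun k => (huk k).1.sub hu.1
  set B : ℕ → ENNReal := fun k => vModular Ω p₁ (fun x => uk k x - u x) with hBdef
  have hBfin : ∀ k, B k ≠ ⊤ := fun k =>
    (modular_sub_lt_top (hae₁.mono fun x hx => ⟨by linarith [hx.1], hx.2⟩) hp₁m
      (huk k).1 (huk k).2 hu.2).ne
  -- Step A : the modular of the differences tends to 0
  have hmod1 : ∀ lam : ℝ, 0 < lam →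
      ∀ᶠ k in atTop, vModular Ω p₁ (fun x => (uk k x - u x) / lam) ≤ 1 := by
    intro lam hlam
    filter_upwards [hconv.eventually (gt_mem_nhds hlam)] with k hk
    exact modular_le_one_of_norm_lt (hae₁.mono fun x hx => by linarith [hx.1])
      (norm_set_nonempty (by linarith) hm₁M₁ hae₁ (hBfin k)) hk
  have hB0 : Tendsto B atTop (nhds 0) := by
    rw [ENNReal.tendsto_atTop_zero]
    intro ε hε
    -- choose a small lam
    obtain ⟨lam, hlam0, hlam1, hlamε⟩ :
        ∃ lam : ℝ, 0 < lam ∧ lam ≤ 1 ∧ ENNReal.ofReal (lam ^ m₁) ≤ ε := by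
      rcases le_or_gt 1 ε with h | h
      · exact ⟨1, one_pos, le_rfl, by simpa using h⟩
      · have hεt : ε ≠ ⊤ := by intro h'; rw [h'] at h; exact absurd h (by simp)
        have hεt0 : 0 < ε.toReal := ENNReal.toReal_pos hε.ne' hεt
        have hεt1 : ε.toReal ≤ 1 := by
          have := ENNReal.toReal_mono ENNReal.one_ne_top h.le
          simpa using this
        refine ⟨ε.toReal ^ m₁⁻¹, Real.rpow_pos_of_pos hεt0 _,
          Real.rpow_le_one hεt0.le hεt1 (by positivity), ?_⟩
        have : (ε.toReal ^ m₁⁻¹) ^ m₁ = ε.toReal := by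
          rw [← Real.rpow_mul hεt0.le, inv_mul_cancel₀ (by linarith : m₁ ≠ 0), Real.rpow_one]
        rw [this, ENNReal.ofReal_toReal hεt]
    have hev := hmod1 lam hlam0
    rw [eventually_atTop] at hev
    obtain ⟨K, hK⟩ := hev
    refine ⟨K, fun n hn => ?_⟩
    have h1 : B n ≤ ENNReal.ofReal (max (lam ^ m₁) (lam ^ M₁)) *
        vModular Ω p₁ (fun x => (uk n x - u x) / lam) :=
      modular_le_of_div (by linarith) hae₁ _ hlam0
    have hmax : max (lam ^ m₁) (lam ^ M₁) = lam ^ m₁ :=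
      max_eq_left (Real.rpow_le_rpow_of_exponent_ge hlam0 hlam1 hm₁M₁)
    calc B n ≤ ENNReal.ofReal (lam ^ m₁) * vModular Ω p₁ (fun x => (uk n x - u x) / lam) := by
          rw [← hmax]; exact h1
      _ ≤ ENNReal.ofReal (lam ^ m₁) * 1 := by
          exact mul_le_mul_right (hK n hn) _
      _ = ENNReal.ofReal (lam ^ m₁) := by rw [mul_one]
      _ ≤ ε := hlamε
  -- Carathéodory compositions are measurable
  have hcompmeas : ∀ v : (Fin N → ℝ) → ℝ, AEMeasurable v (volume.restrict Ω) →
      AEMeasurable (fun x => f x (v x)) (volume.restrict Ω) :=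
    fun v hv => aemeasurable_nemytskii hΩm hfmeas hfcont hv
  set A : ℕ → ENNReal := fun k => vModular Ω p₂ (fun x => f x (uk k x) - f x (u x)) with hAdef
  have hFmeas : ∀ k, AEMeasurable
      (fun x => ENNReal.ofReal (|f x (uk k x) - f x (u x)| ^ p₂ x)) (volume.restrict Ω) :=
    fun k => ((aemeasurable_abs' ((hcompmeas _ (huk k).1).sub (hcompmeas _ hu.1))).pow hp₂m).ennreal_ofReal
  -- Step B : the modular of the image differences tends to 0
  have hA0 : Tendsto A atTop (nhds 0) := by
    refine tendsto_of_subseq_tendsto fun ns hns => ?_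
    have hBns : Tendsto (fun j => B (ns j)) atTop (nhds 0) := hB0.comp hns
    have hms : ∀ j : ℕ, ∃ m, B (ns m) ≤ (2:ENNReal)⁻¹ ^ j := by
      intro j
      obtain ⟨K, hK⟩ := (ENNReal.tendsto_atTop_zero.mp hBns) ((2:ENNReal)⁻¹ ^ j)
        (ENNReal.pow_pos (ENNReal.inv_pos.mpr (by norm_num)) j)
      exact ⟨K, hK K le_rfl⟩
    choose ms hms using hms
    refine ⟨ms, ?_⟩
    set φ : ℕ → ℕ := fun j => ns (ms j) with hφdef
    have hsum : ∑' j, B (φ j) ≠ ⊤ := by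
      refine ne_top_of_le_ne_top ?_ (ENNReal.tsum_le_tsum hms)
      rw [ENNReal.tsum_geometric, ENNReal.one_sub_inv_two]
      simp
    have gmeas : ∀ j, AEMeasurable
        (fun x => ENNReal.ofReal (|uk (φ j) x - u x| ^ p₁ x)) (volume.restrict Ω) :=
      fun j => ((aemeasurable_abs' (hvmeas (φ j))).pow hp₁m).ennreal_ofReal
    have hlint : ∫⁻ x in Ω, ∑' j, ENNReal.ofReal (|uk (φ j) x - u x| ^ p₁ x) =
        ∑' j, B (φ j) := lintegral_tsum gmeas
    have htsumfin : ∀ᵐ x ∂(volume.restrict Ω),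
        ∑' j, ENNReal.ofReal (|uk (φ j) x - u x| ^ p₁ x) < ⊤ := by
      refine ae_lt_top' (AEMeasurable.ennreal_tsum gmeas) ?_
      rw [hlint]; exact hsum
    -- a.e. convergence of the subsequence
    have haeconv : ∀ᵐ x ∂(volume.restrict Ω),
        Tendsto (fun j => uk (φ j) x) atTop (nhds (u x)) := by
      filter_upwards [htsumfin, hae₁] with x hx hx1
      have hp0 : 0 < p₁ x := by linarith [hx1.1]
      have hterm : Tendsto (fun j => ENNReal.ofReal (|uk (φ j) x - u x| ^ p₁ x)) atTop
          (nhds 0) := ENNReal.tendsto_atTop_zero_of_tsum_ne_top hx.ne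
      have hreal : Tendsto (fun j => |uk (φ j) x - u x| ^ p₁ x) atTop (nhds 0) := by
        have h2 := (ENNReal.tendsto_toReal (by simp : (0:ENNReal) ≠ ⊤)).comp hterm
        simp only [ENNReal.toReal_zero] at h2
        refine h2.congr fun j => ?_
        exact ENNReal.toReal_ofReal (Real.rpow_nonneg (abs_nonneg _) _)
      have habs : Tendsto (fun j => |uk (φ j) x - u x|) atTop (nhds 0) := by
        have hcont : ContinuousAt (fun t : ℝ => t ^ (p₁ x)⁻¹) 0 :=
          Real.continuousAt_rpow_const 0 _ (Or.inr (by positivity))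
        have h3 : Tendsto (fun j => (|uk (φ j) x - u x| ^ p₁ x) ^ (p₁ x)⁻¹) atTop
            (nhds ((0:ℝ) ^ (p₁ x)⁻¹)) := hcont.tendsto.comp hreal
        rw [Real.zero_rpow (inv_ne_zero hp0.ne')] at h3
        refine h3.congr fun j => ?_
        rw [← Real.rpow_mul (abs_nonneg _), mul_inv_cancel₀ hp0.ne', Real.rpow_one]
      have hsub : Tendsto (fun j => uk (φ j) x - u x) atTop (nhds 0) := by
        rw [tendsto_zero_iff_abs_tendsto_zero]
        exact habs
      have := hsub.add (tendsto_const_nhds (x := u x))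
      simpa using this
    -- a.e. convergence of the composed sequence
    have hFconv : ∀ᵐ x ∂(volume.restrict Ω),
        Tendsto (fun j => ENNReal.ofReal (|f x (uk (φ j) x) - f x (u x)| ^ p₂ x)) atTop
          (nhds 0) := by
      filter_upwards [haeconv, hfcont, hae₂] with x hx hfc hx2
      have hq0 : 0 < p₂ x := by linarith [hx2.1]
      have h1 : Tendsto (fun j => f x (uk (φ j) x)) atTop (nhds (f x (u x))) :=
        (hfc.tendsto _).comp hx
      have h2 : Tendsto (fun j => f x (uk (φ j) x) - f x (u x)) atTop (nhds 0) := by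
        simpa using h1.sub (tendsto_const_nhds (x := f x (u x)))
      have h3 : Tendsto (fun j => |f x (uk (φ j) x) - f x (u x)|) atTop (nhds 0) := by
        have := h2.abs; simpa using this
      have hcont : ContinuousAt (fun t : ℝ => t ^ p₂ x) 0 :=
        Real.continuousAt_rpow_const 0 _ (Or.inr hq0.le)
      have h4 := hcont.tendsto.comp h3
      simp only [Real.zero_rpow hq0.ne', Function.comp] at h4
      have h5 := (ENNReal.continuous_ofReal.tendsto _).comp h4
      simpa [Function.comp_def] using h5
    -- domination
    set Bc : ℝ := (max 1 b) ^ M₂ with hBcdef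
    have hBc0 : 0 ≤ Bc := Real.rpow_nonneg (le_max_of_le_left zero_le_one) _
    set K : ℝ := 4 ^ M₂ * (2 ^ M₂ + Bc * 2 ^ M₁ + (Bc * 2 ^ M₁ + Bc)) with hKdef
    have hK0 : 0 ≤ K := by positivity
    set G : (Fin N → ℝ) → ENNReal := fun x => ENNReal.ofReal K *
        (ENNReal.ofReal (|d x| ^ p₂ x) + ENNReal.ofReal (|u x| ^ p₁ x) +
          ∑' j, ENNReal.ofReal (|uk (φ j) x - u x| ^ p₁ x)) with hGdef
    have hbound : ∀ j, (fun x => ENNReal.ofReal (|f x (uk (φ j) x) - f x (u x)| ^ p₂ x))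
        ≤ᵐ[volume.restrict Ω] G := by
      intro j
      filter_upwards [haeΩ, hae₁, hae₂] with x hxΩ hx1 hx2
      have hq0 : (0:ℝ) ≤ p₂ x := by linarith [hx2.1]
      have hp0 : (0:ℝ) ≤ p₁ x := by linarith [hx1.1]
      have hq0' : p₂ x ≠ 0 := by intro h'; rw [h'] at hx2; linarith [hx2.1]
      -- the real pointwise bound
      have hreal : |f x (uk (φ j) x) - f x (u x)| ^ p₂ x ≤
          K * (|d x| ^ p₂ x + |u x| ^ p₁ x + |uk (φ j) x - u x| ^ p₁ x) := by
        set s := uk (φ j) x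
        set w := s - u x with hwdef
        have hg1 := hgrowth x hxΩ s
        have hg2 := hgrowth x hxΩ (u x)
        have hdx : d x ≤ |d x| := le_abs_self _
        have htri : |f x s - f x (u x)| ≤
            2 * |d x| + b * |s| ^ (p₁ x / p₂ x) + b * |u x| ^ (p₁ x / p₂ x) := by
          have := abs_sub (f x s) (f x (u x))
          have hb1 : |f x s| ≤ |d x| + b * |s| ^ (p₁ x / p₂ x) := le_trans hg1 (by linarith)
          have hb2 : |f x (u x)| ≤ |d x| + b * |u x| ^ (p₁ x / p₂ x) := le_trans hg2 (by linarith)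
          calc |f x s - f x (u x)| ≤ |f x s| + |f x (u x)| := abs_sub _ _
            _ ≤ 2 * |d x| + b * |s| ^ (p₁ x / p₂ x) + b * |u x| ^ (p₁ x / p₂ x) := by linarith
        have hterm1 : (2 * |d x|) ^ p₂ x ≤ 2 ^ M₂ * |d x| ^ p₂ x := by
          rw [Real.mul_rpow (by norm_num) (abs_nonneg _)]
          exact mul_le_mul_of_nonneg_right
            (Real.rpow_le_rpow_of_exponent_le one_le_two hx2.2)
            (Real.rpow_nonneg (abs_nonneg _) _)
        have hrpow_comp : ∀ t : ℝ, (b * |t| ^ (p₁ x / p₂ x)) ^ p₂ x ≤ Bc * |t| ^ p₁ x := by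
          intro t
          rw [Real.mul_rpow hb (Real.rpow_nonneg (abs_nonneg _) _),
            ← Real.rpow_mul (abs_nonneg _), div_mul_cancel₀ _ hq0']
          exact mul_le_mul_of_nonneg_right (base_rpow_le' hb hq0 hx2.2)
            (Real.rpow_nonneg (abs_nonneg _) _)
        have hsw : |s| ^ p₁ x ≤ 2 ^ M₁ * (|w| ^ p₁ x + |u x| ^ p₁ x) := by
          have h0 : |s| ≤ |w| + |u x| := by
            rw [hwdef]
            calc |s| = |(s - u x) + u x| := by ring_nf
              _ ≤ |s - u x| + |u x| := abs_add_le _ _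
          calc |s| ^ p₁ x ≤ (|w| + |u x|) ^ p₁ x :=
                Real.rpow_le_rpow (abs_nonneg _) h0 hp0
            _ ≤ 2 ^ M₁ * (|w| ^ p₁ x + |u x| ^ p₁ x) :=
                add_rpow_le' (abs_nonneg _) (abs_nonneg _) hp0 hx1.2
        have hmain : |f x s - f x (u x)| ^ p₂ x ≤
            4 ^ M₂ * ((2 * |d x|) ^ p₂ x + (b * |s| ^ (p₁ x / p₂ x)) ^ p₂ x +
              (b * |u x| ^ (p₁ x / p₂ x)) ^ p₂ x) := by
          refine le_trans (Real.rpow_le_rpow (abs_nonneg _) htri hq0) ?_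
          exact add3_rpow_le' (by positivity) (by positivity) (by positivity) hq0 hx2.2
        have h2 := hrpow_comp s
        have h3 := hrpow_comp (u x)
        have h4M : (0:ℝ) ≤ 4 ^ M₂ := Real.rpow_nonneg (by norm_num) _
        have hXd : (0:ℝ) ≤ |d x| ^ p₂ x := Real.rpow_nonneg (abs_nonneg _) _
        have hXu : (0:ℝ) ≤ |u x| ^ p₁ x := Real.rpow_nonneg (abs_nonneg _) _
        have hXw : (0:ℝ) ≤ |w| ^ p₁ x := Real.rpow_nonneg (abs_nonneg _) _
        have h2M2 : (0:ℝ) ≤ 2 ^ M₂ := Real.rpow_nonneg (by norm_num) _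
        have h2M1' : (0:ℝ) ≤ 2 ^ M₁ := Real.rpow_nonneg (by norm_num) _
        have hS : Bc * |s| ^ p₁ x ≤ Bc * 2 ^ M₁ * (|w| ^ p₁ x + |u x| ^ p₁ x) := by
          rw [mul_assoc]; exact mul_le_mul_of_nonneg_left hsw hBc0
        have hT : (2 * |d x|) ^ p₂ x + (b * |s| ^ (p₁ x / p₂ x)) ^ p₂ x +
            (b * |u x| ^ (p₁ x / p₂ x)) ^ p₂ x ≤
            (2 ^ M₂ + Bc * 2 ^ M₁ + (Bc * 2 ^ M₁ + Bc)) *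
              (|d x| ^ p₂ x + |u x| ^ p₁ x + |w| ^ p₁ x) := by
          nlinarith [hterm1, h2.trans hS, h3, mul_nonneg h2M2 hXu, mul_nonneg h2M2 hXw,
            mul_nonneg (mul_nonneg hBc0 h2M1') hXd, mul_nonneg hBc0 hXd,
            mul_nonneg hBc0 hXw, mul_nonneg (mul_nonneg hBc0 h2M1') hXu,
            mul_nonneg (mul_nonneg hBc0 h2M1') hXw]
        calc |f x s - f x (u x)| ^ p₂ x
            ≤ 4 ^ M₂ * ((2 * |d x|) ^ p₂ x + (b * |s| ^ (p₁ x / p₂ x)) ^ p₂ x +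
              (b * |u x| ^ (p₁ x / p₂ x)) ^ p₂ x) := hmain
          _ ≤ 4 ^ M₂ * ((2 ^ M₂ + Bc * 2 ^ M₁ + (Bc * 2 ^ M₁ + Bc)) *
              (|d x| ^ p₂ x + |u x| ^ p₁ x + |w| ^ p₁ x)) :=
              mul_le_mul_of_nonneg_left hT h4M
          _ = K * (|d x| ^ p₂ x + |u x| ^ p₁ x + |w| ^ p₁ x) := by
              rw [hKdef]; ring
      -- to ENNReal
      calc ENNReal.ofReal (|f x (uk (φ j) x) - f x (u x)| ^ p₂ x)
          ≤ ENNReal.ofReal (K * (|d x| ^ p₂ x + |u x| ^ p₁ x + |uk (φ j) x - u x| ^ p₁ x)) :=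
            ENNReal.ofReal_le_ofReal hreal
        _ = ENNReal.ofReal K * (ENNReal.ofReal (|d x| ^ p₂ x) + ENNReal.ofReal (|u x| ^ p₁ x) +
              ENNReal.ofReal (|uk (φ j) x - u x| ^ p₁ x)) := by
            rw [ENNReal.ofReal_mul hK0,
              ENNReal.ofReal_add (by positivity) (Real.rpow_nonneg (abs_nonneg _) _),
              ENNReal.ofReal_add (Real.rpow_nonneg (abs_nonneg _) _)
                (Real.rpow_nonneg (abs_nonneg _) _)]
        _ ≤ G x := by
            refine mul_le_mul_right (add_le_add_right ?_ _) _
            exact ENNReal.le_tsum j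
    have hGfin : ∫⁻ x in Ω, G x ∂volume ≠ ⊤ := by
      have e1 : ∫⁻ x in Ω, (ENNReal.ofReal (|d x| ^ p₂ x) + ENNReal.ofReal (|u x| ^ p₁ x) +
          ∑' j, ENNReal.ofReal (|uk (φ j) x - u x| ^ p₁ x)) =
          (vModular Ω p₂ d + vModular Ω p₁ u) + ∑' j, B (φ j) := by
        rw [lintegral_add_left' (show AEMeasurable (fun x => ENNReal.ofReal (|d x| ^ p₂ x) +
            ENNReal.ofReal (|u x| ^ p₁ x)) (volume.restrict Ω) from
          (((aemeasurable_abs' hd.1).pow hp₂m).ennreal_ofReal).add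
          (((aemeasurable_abs' hu.1).pow hp₁m).ennreal_ofReal)) _, hlint,
          lintegral_add_left' (((aemeasurable_abs' hd.1).pow hp₂m).ennreal_ofReal) _]
        rfl
      rw [hGdef]
      rw [lintegral_const_mul' _ _ ENNReal.ofReal_ne_top, e1]
      exact ENNReal.mul_ne_top ENNReal.ofReal_ne_top
        (ENNReal.add_ne_top.mpr ⟨ENNReal.add_ne_top.mpr ⟨hd.2.ne, hu.2.ne⟩, hsum⟩)
    have hdc := tendsto_lintegral_of_dominated_convergence' (μ := volume.restrict Ω)
      (F := fun j x => ENNReal.ofReal (|f x (uk (φ j) x) - f x (u x)| ^ p₂ x))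
      (f := fun _ => (0:ENNReal)) G (fun j => hFmeas (φ j)) hbound hGfin hFconv
    simp only [lintegral_zero] at hdc; exact hdc
  -- Step C : from modular convergence to norm convergence
  rw [Metric.tendsto_atTop]
  intro ε hε
  have hε2 : 0 < ε / 2 := by linarith
  set c : ℝ := max ((ε/2)⁻¹ ^ m₂) ((ε/2)⁻¹ ^ M₂) with hcdef
  have hcfin : ENNReal.ofReal c ≠ ⊤ := ENNReal.ofReal_ne_top
  have hinvpos : 0 < (ENNReal.ofReal c)⁻¹ := ENNReal.inv_pos.mpr hcfin
  have hev : ∀ᶠ k in atTop, A k < (ENNReal.ofReal c)⁻¹ := hA0.eventually_lt_const hinvpos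
  rw [eventually_atTop] at hev
  obtain ⟨K, hK⟩ := hev
  refine ⟨K, fun n hn => ?_⟩
  have hmem : vModular Ω p₂ (fun x => (f x (uk n x) - f x (u x)) / (ε/2)) ≤ 1 := by
    have h1 : vModular Ω p₂ (fun x => (f x (uk n x) - f x (u x)) / (ε/2)) ≤
        ENNReal.ofReal c * A n :=
      modular_div_le (by linarith : (0:ℝ) ≤ m₂) hae₂ _ hε2
    refine le_trans h1 ?_
    calc ENNReal.ofReal c * A n ≤ ENNReal.ofReal c * (ENNReal.ofReal c)⁻¹ :=
          mul_le_mul_right (hK n hn).le _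
      _ ≤ 1 := ENNReal.mul_inv_le_one _
  have hle : vNorm Ω p₂ (fun x => f x (uk n x) - f x (u x)) ≤ ε / 2 :=
    csInf_le ⟨0, fun l hl => hl.1.le⟩ ⟨hε2, hmem⟩
  have hge : 0 ≤ vNorm Ω p₂ (fun x => f x (uk n x) - f x (u x)) := norm_nonneg_v _ _ _
  rw [Real.dist_eq]
  rw [abs_of_nonneg (by simpa using hge)]
  simpa using lt_of_le_of_lt hle (by linarith)
end

section
/- Simon-type monotonicity inequality for p ≥ 2: if p ≥ 2, then for all u, v ∈ ℝ^N one has ⟨F(u) − F(v), u − v⟩ ≥ 4^{1−p} · c · |u − v|^p. -/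
/-!
Writing `a = ‖u‖`, `b = ‖v‖`, the quantity `⟪F u - F v, u - v⟫` splits as
`(a φ a - b φ b) (a - b) + (φ a + φ b)/2 · (‖u - v‖² - (a - b)²)`, a radial part and an angular
part, both nonnegative. The hypothesis on `φ + ξ φ'` makes `ξ ↦ ξ φ ξ - c ξ^(p-1)/(p-1)` monotone,
which bounds the radial part by `c a^(p-2) (a - b)²/(p - 1)`, and `φ ≥ c ξ^(p-2)` bounds the
angular part by `c a^(p-2)/2 · (‖u - v‖² - (a - b)²)`. Hence the sum is at least
`c a^(p-2) ‖u - v‖²/(p + 1)`, and `‖u - v‖ ≤ 2a` together with `p + 1 ≤ 2^p` gives the constant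
`4^(1-p)`.
-/

open Real
open scoped InnerProductSpace

lemma one_add_le_two_rpow {p : ℝ} (hp : 1 ≤ p) : 1 + p ≤ 2 ^ p := by
  simpa [one_add_one_eq_two] using one_add_mul_self_le_rpow_one_add (s := 1) (by norm_num) hp

lemma rpow_sub_one_mul_sub_le_rpow_sub_rpow {q a b : ℝ} (hq : 1 ≤ q) (hb : 0 ≤ b) (hba : b ≤ a) :
    a ^ (q - 1) * (a - b) ≤ a ^ q - b ^ q := by
  have hsplit : ∀ x : ℝ, 0 ≤ x → x ^ q = x ^ (q - 1) * x := fun x hx => by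
    simpa using rpow_add' hx (by linarith : q - 1 + 1 ≠ 0)
  have hle : b ^ (q - 1) ≤ a ^ (q - 1) := rpow_le_rpow hb hba (by linarith)
  rw [hsplit a (hb.trans hba), hsplit b hb]
  nlinarith

lemma div_mul_rpow_sub_rpow_le_of_hasDerivAt {p c : ℝ} (hp : p ≠ 1) {φ φ' : ℝ → ℝ}
    (hderiv : ∀ ξ > 0, HasDerivAt φ (φ' ξ) ξ)
    (hφ' : ∀ ξ > 0, c * ξ ^ (p - 2) ≤ φ ξ + ξ * φ' ξ) {a b : ℝ} (hb : 0 < b) (hba : b ≤ a) :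
    c / (p - 1) * (a ^ (p - 1) - b ^ (p - 1)) ≤ φ a * a - φ b * b := by
  have hp1 : p - 1 ≠ 0 := sub_ne_zero.2 hp
  have hd : ∀ ξ > 0, HasDerivAt (fun ξ => ξ * φ ξ - c / (p - 1) * ξ ^ (p - 1))
      (φ ξ + ξ * φ' ξ - c * ξ ^ (p - 2)) ξ := fun ξ hξ => by
    have hpow : HasDerivAt (fun ξ : ℝ => ξ ^ (p - 1)) ((p - 1) * ξ ^ (p - 2)) ξ := by
      simpa [show p - 1 - 1 = p - 2 by ring] using hasDerivAt_rpow_const (p := p - 1) (Or.inl hξ.ne')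
    have h := ((hasDerivAt_id' ξ).mul (hderiv ξ hξ)).sub (hpow.const_mul (c / (p - 1)))
    rwa [one_mul, ← mul_assoc, div_mul_cancel₀ c hp1] at h
  have hmono : MonotoneOn (fun ξ => ξ * φ ξ - c / (p - 1) * ξ ^ (p - 1)) (Set.Ioi 0) := by
    refine monotoneOn_of_hasDerivWithinAt_nonneg (f' := fun ξ => φ ξ + ξ * φ' ξ - c * ξ ^ (p - 2))
      (convex_Ioi 0)
      (fun ξ hξ => (hd ξ hξ).continuousAt.continuousWithinAt) (fun ξ hξ => ?_) (fun ξ hξ => ?_)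
    · rw [interior_Ioi] at hξ ⊢
      exact (hd ξ hξ).hasDerivWithinAt
    · rw [interior_Ioi] at hξ
      exact sub_nonneg.2 (hφ' ξ hξ)
  have := hmono hb (hb.trans_le hba) hba
  simp only at this
  linarith

lemma div_mul_rpow_mul_sub_le_mul_sub_mul {p c : ℝ} (hp : 2 ≤ p) (hc : 0 ≤ c) {φ φ' : ℝ → ℝ}
    (hderiv : ∀ ξ > 0, HasDerivAt φ (φ' ξ) ξ) (hφ : ∀ ξ > 0, c * ξ ^ (p - 2) ≤ φ ξ)
    (hφ' : ∀ ξ > 0, c * ξ ^ (p - 2) ≤ φ ξ + ξ * φ' ξ) {a b : ℝ} (ha : 0 < a) (hb : 0 ≤ b)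
    (hba : b ≤ a) :
    c / (p - 1) * a ^ (p - 2) * (a - b) ≤ φ a * a - φ b * b := by
  have hcp : 0 ≤ c / (p - 1) := div_nonneg hc (by linarith)
  rcases hb.eq_or_lt with rfl | hb
  · have : c / (p - 1) ≤ c := div_le_self hc (by linarith)
    rw [sub_zero, mul_zero, sub_zero]
    exact mul_le_mul_of_nonneg_right
      ((mul_le_mul_of_nonneg_right this (rpow_nonneg ha.le _)).trans (hφ a ha)) ha.le
  calc c / (p - 1) * a ^ (p - 2) * (a - b)
      ≤ c / (p - 1) * (a ^ (p - 1) - b ^ (p - 1)) := by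
        rw [mul_assoc]
        gcongr
        simpa [show p - 1 - 1 = p - 2 by ring] using
          rpow_sub_one_mul_sub_le_rpow_sub_rpow (q := p - 1) (by linarith) hb.le hba
    _ ≤ φ a * a - φ b * b := by
        linarith [div_mul_rpow_sub_rpow_le_of_hasDerivAt (by linarith) hderiv hφ' hb hba]

lemma four_rpow_mul_rpow_le {p c a b D α β : ℝ} (hp : 2 ≤ p) (hc : 0 ≤ c) (hb : 0 ≤ b)
    (hba : b ≤ a) (hD : a - b ≤ D) (hD' : D ≤ a + b) (hα : c * a ^ (p - 2) ≤ α) (hβ : 0 ≤ β)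
    (hradial : c / (p - 1) * a ^ (p - 2) * (a - b) ≤ α * a - β * b) :
    4 ^ (1 - p) * c * D ^ p ≤ (α * a - β * b) * (a - b) + (α + β) / 2 * (D ^ 2 - (a - b) ^ 2) := by
  have hD0 : 0 ≤ D := by linarith
  set m := c * a ^ (p - 2)
  have hm : 0 ≤ m := mul_nonneg hc (rpow_nonneg (hb.trans hba) _)
  have hangle : 0 ≤ D ^ 2 - (a - b) ^ 2 := by nlinarith
  have hradial' : m / (p + 1) * (a - b) ^ 2 ≤ (α * a - β * b) * (a - b) := by
    have : m / (p + 1) ≤ c / (p - 1) * a ^ (p - 2) :=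
      calc m / (p + 1) ≤ m / (p - 1) := div_le_div_of_nonneg_left hm (by linarith) (by linarith)
        _ = c / (p - 1) * a ^ (p - 2) := by ring
    nlinarith [mul_le_mul_of_nonneg_right this (by nlinarith : 0 ≤ (a - b) ^ 2)]
  have hangular : m / (p + 1) * (D ^ 2 - (a - b) ^ 2) ≤ (α + β) / 2 * (D ^ 2 - (a - b) ^ 2) := by
    refine mul_le_mul_of_nonneg_right ?_ hangle
    have : m / (p + 1) ≤ m / 2 := div_le_div_of_nonneg_left hm (by norm_num) (by linarith)
    linarith
  have hconst : (4 : ℝ) ^ (1 - p) * 2 ^ (p - 2) ≤ 1 / (p + 1) := by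
    have h4 : (4 : ℝ) ^ (1 - p) * 2 ^ (p - 2) = (2 ^ p)⁻¹ := by
      rw [show (4 : ℝ) = 2 ^ (2 : ℝ) by norm_num, ← rpow_mul (by norm_num),
        ← rpow_add (by norm_num), ← rpow_neg (by norm_num)]
      ring_nf
    rw [h4, one_div]
    exact inv_anti₀ (by linarith) (by linarith [one_add_le_two_rpow (p := p) (by linarith)])
  have hpow : 4 ^ (1 - p) * c * D ^ p ≤ m / (p + 1) * D ^ 2 :=
    calc 4 ^ (1 - p) * c * D ^ p = 4 ^ (1 - p) * c * (D ^ (p - 2) * D ^ 2) := by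
          rw [← rpow_natCast, ← rpow_add' hD0 (ne_of_gt (by norm_num; linarith))]
          norm_num
      _ ≤ 4 ^ (1 - p) * c * ((2 * a) ^ (p - 2) * D ^ 2) := by
          gcongr
          linarith
      _ = (4 ^ (1 - p) * 2 ^ (p - 2)) * m * D ^ 2 := by
          rw [mul_rpow (by norm_num) (by linarith)]
          ring
      _ ≤ 1 / (p + 1) * m * D ^ 2 := by gcongr
      _ = m / (p + 1) * D ^ 2 := by ring
  linarith

section InnerProductSpace

variable {E : Type*} [NormedAddCommGroup E] [InnerProductSpace ℝ E]

lemma inner_smul_sub_smul_sub_self (u v : E) (α β : ℝ) :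
    ⟪α • u - β • v, u - v⟫_ℝ = (α * ‖u‖ - β * ‖v‖) * (‖u‖ - ‖v‖)
      + (α + β) / 2 * (‖u - v‖ ^ 2 - (‖u‖ - ‖v‖) ^ 2) := by
  rw [norm_sub_sq_real]
  simp only [inner_sub_left, inner_sub_right, real_inner_smul_left, real_inner_self_eq_norm_sq,
    real_inner_comm u v]
  ring

lemma four_rpow_mul_norm_sub_rpow_le_inner {p c α β : ℝ} (hp : 2 ≤ p) (hc : 0 ≤ c) {u v : E}
    (hvu : ‖v‖ ≤ ‖u‖) (hα : c * ‖u‖ ^ (p - 2) ≤ α) (hβ : 0 ≤ β)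
    (hradial : c / (p - 1) * ‖u‖ ^ (p - 2) * (‖u‖ - ‖v‖) ≤ α * ‖u‖ - β * ‖v‖) :
    4 ^ (1 - p) * c * ‖u - v‖ ^ p ≤ ⟪α • u - β • v, u - v⟫_ℝ := by
  rw [inner_smul_sub_smul_sub_self]
  exact four_rpow_mul_rpow_le hp hc (norm_nonneg v) hvu (by linarith [norm_sub_norm_le u v])
    (norm_sub_le u v) hα hβ hradial

end InnerProductSpace

theorem simon_inequality_p_ge_two_general {N : ℕ} (p c : ℝ)
    (hc : 0 < c) (φ φ' : ℝ → ℝ)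
    (hderiv : ∀ ξ > (0 : ℝ), HasDerivAt φ (φ' ξ) ξ)
    (hφ : ∀ ξ > (0 : ℝ), c * ξ ^ (p - 2) ≤ φ ξ)
    (hφ' : ∀ ξ > (0 : ℝ), c * ξ ^ (p - 2) ≤ φ ξ + ξ * φ' ξ)
    (F : EuclideanSpace ℝ (Fin N) → EuclideanSpace ℝ (Fin N))
    (hF : ∀ v : EuclideanSpace ℝ (Fin N), v ≠ 0 → F v = φ ‖v‖ • v) (hF0 : F 0 = 0)
    (hp2 : 2 ≤ p) :
    ∀ u v : EuclideanSpace ℝ (Fin N),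
      (4 : ℝ) ^ (1 - p) * c * ‖u - v‖ ^ p ≤ (inner ℝ (F u - F v) (u - v) : ℝ) := by
  intro u v
  wlog hvu : ‖v‖ ≤ ‖u‖ generalizing u v
  · rw [norm_sub_rev, ← inner_neg_neg, neg_sub, neg_sub]
    exact this v u (le_of_not_ge hvu)
  rcases eq_or_ne u 0 with rfl | hu
  · obtain rfl : v = 0 := norm_le_zero_iff.mp (by simpa using hvu)
    simp [hF0, zero_rpow (by linarith : p ≠ 0)]
  have ha : 0 < ‖u‖ := norm_pos_iff.2 hu
  have hradial := div_mul_rpow_mul_sub_le_mul_sub_mul hp2 hc.le hderiv hφ hφ' ha (norm_nonneg v) hvu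
  rw [hF u hu]
  rcases eq_or_ne v 0 with rfl | hv
  · -- `φ 0` has no known sign, so write `F 0` as `0 • 0` instead of `φ 0 • 0`.
    simpa [hF0] using four_rpow_mul_norm_sub_rpow_le_inner (v := 0) (β := 0) hp2 hc.le hvu
      (hφ _ ha) le_rfl (by simpa using hradial)
  rw [hF v hv]
  exact four_rpow_mul_norm_sub_rpow_le_inner hp2 hc.le hvu (hφ _ ha)
    ((by positivity : 0 ≤ c * ‖v‖ ^ (p - 2)).trans (hφ _ (norm_pos_iff.2 hv))) hradial

/-- Simon-type monotonicity inequality for `p ≥ 2`. -/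
theorem simon_inequality_p_ge_two {N : ℕ} (hN : 1 ≤ N) (p c : ℝ)
    (hp : 1 < p) (hc : 0 < c) (φ φ' : ℝ → ℝ)
    (hderiv : ∀ ξ > (0 : ℝ), HasDerivAt φ (φ' ξ) ξ)
    (hderivcont : ContinuousOn φ' (Set.Ioi 0))
    (hφ : ∀ ξ > (0 : ℝ), c * ξ ^ (p - 2) ≤ φ ξ)
    (hφ' : ∀ ξ > (0 : ℝ), c * ξ ^ (p - 2) ≤ φ ξ + ξ * φ' ξ)
    (F : EuclideanSpace ℝ (Fin N) → EuclideanSpace ℝ (Fin N))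
    (hF : ∀ v : EuclideanSpace ℝ (Fin N), v ≠ 0 → F v = φ ‖v‖ • v) (hF0 : F 0 = 0)
    (hp2 : 2 ≤ p) :
    ∀ u v : EuclideanSpace ℝ (Fin N),
      (4 : ℝ) ^ (1 - p) * c * ‖u - v‖ ^ p ≤ (inner ℝ (F u - F v) (u - v) : ℝ) :=
  simon_inequality_p_ge_two_general p c hc φ φ' hderiv hφ hφ' F hF hF0 hp2
end

section
/- Simon-type monotonicity inequality for 1 < p < 2: if 1 < p < 2, then for all u, v ∈ ℝ^N with (u, v) ≠ (0, 0) one has ⟨F(u) − F(v), u − v⟩ ≥ c · (|u| + |v|)^{p−2} · |u − v|². -/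
/-!
Write `F w = φ ‖w‖ • w` and `d = u - v`. If the segment from `v` to `u` avoids the origin, the
derivative of `s ↦ ⟪F (v + s d), d⟫` is the quadratic form `φ' ‖w‖ ⟪w, d⟫² / ‖w‖ + φ ‖w‖ ‖d‖²`
at `w = v + s d`, a combination of `φ` and `φ + ‖w‖ φ'` with nonnegative weights summing to
`‖d‖²`; hence it is at least `c ‖w‖^(p-2) ‖d‖² ≥ c (‖u‖ + ‖v‖)^(p-2) ‖d‖²` because `‖w‖ ≤ ‖u‖ + ‖v‖`
and `p ≤ 2`, and the mean value inequality concludes. `F` need not be continuous at the origin,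
so a segment through it is treated directly: then `u` and `-v` lie on a common ray,
`‖u - v‖ = ‖u‖ + ‖v‖`, and the claim reduces to `(a + b)^(p-1) ≤ a^(p-1) + b^(p-1)`.
-/

open Real Set
open scoped RealInnerProductSpace

variable {E : Type*} [NormedAddCommGroup E] [InnerProductSpace ℝ E]

theorem HasDerivAt.norm_of_ne_zero {f : ℝ → E} {f' : E} {x : ℝ} (hf : HasDerivAt f f' x)
    (h0 : f x ≠ 0) : HasDerivAt (fun y => ‖f y‖) (⟪f x, f'⟫ / ‖f x‖) x := by
  have hsq : ‖f x‖ ^ 2 ≠ 0 := by positivity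
  convert hf.norm_sq.sqrt hsq using 1
  · simp only [sqrt_sq (norm_nonneg _)]
  · rw [sqrt_sq (norm_nonneg _)]; field_simp

theorem hasDerivAt_inner_radial_line {φ : ℝ → ℝ} {φ'ρ : ℝ} {v d : E} {t : ℝ}
    (hw : v + t • d ≠ 0) (hφ : HasDerivAt φ φ'ρ ‖v + t • d‖) :
    HasDerivAt (fun s => ⟪φ ‖v + s • d‖ • (v + s • d), d⟫)
      (φ'ρ * ⟪v + t • d, d⟫ ^ 2 / ‖v + t • d‖ + φ ‖v + t • d‖ * ‖d‖ ^ 2) t := by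
  have hline : HasDerivAt (fun s : ℝ => v + s • d) d t := by
    simpa using ((hasDerivAt_id t).smul_const d).const_add v
  have key := (hφ.comp t (hline.norm_of_ne_zero hw)).fun_mul (hline.inner ℝ (hasDerivAt_const t d))
  simp only [Function.comp_apply, inner_zero_right, zero_add, real_inner_self_eq_norm_sq] at key
  simp only [real_inner_smul_left]
  exact key.congr_deriv (by ring)

theorem mul_norm_sq_le_radial_form {a f g : ℝ} {w d : E} (hw : w ≠ 0) (hf : a ≤ f)
    (hg : a ≤ f + ‖w‖ * g) : a * ‖d‖ ^ 2 ≤ g * ⟪w, d⟫ ^ 2 / ‖w‖ + f * ‖d‖ ^ 2 := by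
  have hρ : 0 < ‖w‖ := norm_pos_iff.mpr hw
  set θ := ⟪w, d⟫ ^ 2 / ‖w‖ ^ 2
  have hθ0 : 0 ≤ θ := by positivity
  have hθ : θ ≤ ‖d‖ ^ 2 := by
    rw [div_le_iff₀ (by positivity), ← mul_pow, ← sq_abs]
    exact pow_le_pow_left₀ (abs_nonneg _) ((abs_real_inner_le_norm w d).trans_eq (mul_comm _ _)) 2
  have hform : g * ⟪w, d⟫ ^ 2 / ‖w‖ + f * ‖d‖ ^ 2 = f * (‖d‖ ^ 2 - θ) + (f + ‖w‖ * g) * θ := by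
    simp only [θ]; field_simp; ring
  rw [hform]
  nlinarith [mul_le_mul_of_nonneg_right hf (sub_nonneg.mpr hθ), mul_le_mul_of_nonneg_right hg hθ0]

theorem SameRay.inner_eq_norm_mul_norm {x y : E} (h : SameRay ℝ x y) : ⟪x, y⟫ = ‖x‖ * ‖y‖ :=
  inner_eq_norm_mul_iff_real.mpr h.norm_smul_eq.symm

theorem rpow_sub_two_mul_sq {x : ℝ} (hx : 0 ≤ x) (p : ℝ) :
    x ^ (p - 2) * x ^ 2 = x ^ (p - 1) * x := by
  rcases hx.eq_or_lt with rfl | hx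
  · simp
  · rw [sq, ← mul_assoc, ← rpow_add_one hx.ne']; ring_nf

section Radial

variable {p c : ℝ} {φ φ' : ℝ → ℝ}

theorem le_inner_radial_sub_of_zero_notMem_segment (hp2 : p ≤ 2) (hc : 0 ≤ c)
    (hderiv : ∀ ξ > 0, HasDerivAt φ (φ' ξ) ξ) (hφ : ∀ ξ > 0, c * ξ ^ (p - 2) ≤ φ ξ)
    (hφ' : ∀ ξ > 0, c * ξ ^ (p - 2) ≤ φ ξ + ξ * φ' ξ) {u v : E} (h0 : (0 : E) ∉ segment ℝ v u) :
    c * (‖u‖ + ‖v‖) ^ (p - 2) * ‖u - v‖ ^ 2 ≤ ⟪φ ‖u‖ • u - φ ‖v‖ • v, u - v⟫ := by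
  set d := u - v
  set w : ℝ → E := fun s => v + s • d
  have hw_mem : ∀ s ∈ Icc (0 : ℝ) 1, w s ∈ segment ℝ v u := fun s hs => by
    rw [segment_eq_image']; exact ⟨s, hs, rfl⟩
  have hw_pos : ∀ s ∈ Icc (0 : ℝ) 1, 0 < ‖w s‖ := fun s hs =>
    norm_pos_iff.mpr (ne_of_mem_of_not_mem (hw_mem s hs) h0)
  have hw_le : ∀ s ∈ Icc (0 : ℝ) 1, ‖w s‖ ≤ ‖u‖ + ‖v‖ := fun s hs => by
    simpa using (convex_closedBall (0 : E) (‖u‖ + ‖v‖)).segment_subset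
      (by simp) (by simp) (hw_mem s hs)
  have hg : ∀ s ∈ Icc (0 : ℝ) 1, HasDerivAt (fun s => ⟪φ ‖w s‖ • w s, d⟫)
      (φ' ‖w s‖ * ⟪w s, d⟫ ^ 2 / ‖w s‖ + φ ‖w s‖ * ‖d‖ ^ 2) s := fun s hs =>
    hasDerivAt_inner_radial_line (norm_pos_iff.mp (hw_pos s hs)) (hderiv _ (hw_pos s hs))
  have hg_ge : ∀ s ∈ Icc (0 : ℝ) 1, c * (‖u‖ + ‖v‖) ^ (p - 2) * ‖d‖ ^ 2 ≤
      φ' ‖w s‖ * ⟪w s, d⟫ ^ 2 / ‖w s‖ + φ ‖w s‖ * ‖d‖ ^ 2 := fun s hs =>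
    calc c * (‖u‖ + ‖v‖) ^ (p - 2) * ‖d‖ ^ 2 ≤ c * ‖w s‖ ^ (p - 2) * ‖d‖ ^ 2 := by
          have := rpow_le_rpow_of_nonpos (hw_pos s hs) (hw_le s hs) (by linarith : p - 2 ≤ 0)
          gcongr
      _ ≤ _ := mul_norm_sq_le_radial_form (norm_pos_iff.mp (hw_pos s hs))
          (hφ _ (hw_pos s hs)) (hφ' _ (hw_pos s hs))
  have hslope := (convex_Icc (0 : ℝ) 1).mul_sub_le_image_sub_of_le_deriv
    (fun s hs => (hg s hs).continuousAt.continuousWithinAt)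
    (fun s hs => (hg s (interior_subset hs)).differentiableAt.differentiableWithinAt)
    (fun s hs => (hg s (interior_subset hs)).deriv ▸ hg_ge s (interior_subset hs))
    0 (left_mem_Icc.mpr zero_le_one) 1 (right_mem_Icc.mpr zero_le_one) zero_le_one
  simpa [w, d, inner_sub_left] using hslope

theorem mul_rpow_le_inner_radial (hp : 1 < p) (hφ : ∀ ξ > 0, c * ξ ^ (p - 2) ≤ φ ξ) {w d : E}
    (hwd : ⟪w, d⟫ = ‖w‖ * ‖d‖) : c * ‖w‖ ^ (p - 1) * ‖d‖ ≤ ⟪φ ‖w‖ • w, d⟫ := by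
  rw [real_inner_smul_left, hwd]
  rcases eq_or_ne w 0 with rfl | hw
  · simp [zero_rpow (by linarith : p - 1 ≠ 0)]
  have hρ : 0 < ‖w‖ := norm_pos_iff.mpr hw
  have hpow : ‖w‖ ^ (p - 1) = ‖w‖ ^ (p - 2) * ‖w‖ := by
    rw [← rpow_add_one hρ.ne']; ring_nf
  rw [hpow, ← mul_assoc, ← mul_assoc]
  gcongr
  exact hφ _ hρ

theorem le_inner_radial_sub_of_zero_mem_segment (hp : 1 < p) (hp2 : p ≤ 2) (hc : 0 ≤ c)
    (hφ : ∀ ξ > 0, c * ξ ^ (p - 2) ≤ φ ξ) {u v : E} (h0 : (0 : E) ∈ segment ℝ v u) :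
    c * (‖u‖ + ‖v‖) ^ (p - 2) * ‖u - v‖ ^ 2 ≤ ⟪φ ‖u‖ • u - φ ‖v‖ • v, u - v⟫ := by
  have hray : SameRay ℝ u (-v) := by simpa using (mem_segment_iff_sameRay.mp h0).symm
  have hnorm : ‖u - v‖ = ‖u‖ + ‖v‖ := by simpa [← sub_eq_add_neg] using hray.norm_add
  have hu : SameRay ℝ u (u - v) := sub_eq_add_neg u v ▸ SameRay.rfl.add_right hray
  have hv : SameRay ℝ (-v) (u - v) := sub_eq_add_neg u v ▸ hray.symm.add_right SameRay.rfl
  have hFu := mul_rpow_le_inner_radial hp hφ hu.inner_eq_norm_mul_norm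
  have hFv := mul_rpow_le_inner_radial hp hφ hv.inner_eq_norm_mul_norm
  have hsubadd := rpow_add_le_add_rpow (norm_nonneg u) (norm_nonneg v) (by linarith : 0 ≤ p - 1)
    (by linarith : p - 1 ≤ 1)
  simp only [norm_neg, smul_neg, inner_neg_left] at hFv
  set S := ‖u‖ + ‖v‖
  rw [hnorm, inner_sub_left]
  calc c * S ^ (p - 2) * S ^ 2 = c * S ^ (p - 1) * S := by
        rw [mul_assoc, rpow_sub_two_mul_sq (by positivity), mul_assoc]
    _ ≤ c * (‖u‖ ^ (p - 1) + ‖v‖ ^ (p - 1)) * S := by gcongr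
    _ ≤ _ := by rw [← hnorm]; linarith

theorem le_inner_radial_sub (hp : 1 < p) (hp2 : p ≤ 2) (hc : 0 ≤ c)
    (hderiv : ∀ ξ > 0, HasDerivAt φ (φ' ξ) ξ) (hφ : ∀ ξ > 0, c * ξ ^ (p - 2) ≤ φ ξ)
    (hφ' : ∀ ξ > 0, c * ξ ^ (p - 2) ≤ φ ξ + ξ * φ' ξ) (u v : E) :
    c * (‖u‖ + ‖v‖) ^ (p - 2) * ‖u - v‖ ^ 2 ≤ ⟪φ ‖u‖ • u - φ ‖v‖ • v, u - v⟫ := by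
  by_cases h0 : (0 : E) ∈ segment ℝ v u
  · exact le_inner_radial_sub_of_zero_mem_segment hp hp2 hc hφ h0
  · exact le_inner_radial_sub_of_zero_notMem_segment hp2 hc hderiv hφ hφ' h0

end Radial

theorem simon_inequality_p_lt_two_general {N : ℕ} (p c : ℝ)
    (hp : 1 < p) (hc : 0 < c) (φ φ' : ℝ → ℝ)
    (hderiv : ∀ ξ > (0 : ℝ), HasDerivAt φ (φ' ξ) ξ)
    (hφ : ∀ ξ > (0 : ℝ), c * ξ ^ (p - 2) ≤ φ ξ)
    (hφ' : ∀ ξ > (0 : ℝ), c * ξ ^ (p - 2) ≤ φ ξ + ξ * φ' ξ)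
    (F : EuclideanSpace ℝ (Fin N) → EuclideanSpace ℝ (Fin N))
    (hF : ∀ v : EuclideanSpace ℝ (Fin N), v ≠ 0 → F v = φ ‖v‖ • v) (hF0 : F 0 = 0)
    (hp2 : p < 2) :
    ∀ u v : EuclideanSpace ℝ (Fin N), ¬(u = 0 ∧ v = 0) →
      c * (‖u‖ + ‖v‖) ^ (p - 2) * ‖u - v‖ ^ 2 ≤ (inner ℝ (F u - F v) (u - v) : ℝ) := by
  have hF_eq : F = fun w => φ ‖w‖ • w := by
    funext w
    rcases eq_or_ne w 0 with rfl | hw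
    · simp [hF0]
    · exact hF w hw
  intro u v _
  subst hF_eq
  exact le_inner_radial_sub hp hp2.le hc.le hderiv hφ hφ' u v

/-- Simon-type monotonicity inequality for `1 < p < 2`. -/
theorem simon_inequality_p_lt_two {N : ℕ} (hN : 1 ≤ N) (p c : ℝ)
    (hp : 1 < p) (hc : 0 < c) (φ φ' : ℝ → ℝ)
    (hderiv : ∀ ξ > (0 : ℝ), HasDerivAt φ (φ' ξ) ξ)
    (hderivcont : ContinuousOn φ' (Set.Ioi 0))
    (hφ : ∀ ξ > (0 : ℝ), c * ξ ^ (p - 2) ≤ φ ξ)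
    (hφ' : ∀ ξ > (0 : ℝ), c * ξ ^ (p - 2) ≤ φ ξ + ξ * φ' ξ)
    (F : EuclideanSpace ℝ (Fin N) → EuclideanSpace ℝ (Fin N))
    (hF : ∀ v : EuclideanSpace ℝ (Fin N), v ≠ 0 → F v = φ ‖v‖ • v) (hF0 : F 0 = 0)
    (hp2 : p < 2) :
    ∀ u v : EuclideanSpace ℝ (Fin N), ¬(u = 0 ∧ v = 0) →
      c * (‖u‖ + ‖v‖) ^ (p - 2) * ‖u - v‖ ^ 2 ≤ (inner ℝ (F u - F v) (u - v) : ℝ) :=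
  simon_inequality_p_lt_two_general p c hp hc φ φ' hderiv hφ hφ' F hF hF0 hp2
end

section
/- Strict monotonicity of the vector field F: for every p > 1 and all u, v ∈ ℝ^N with u ≠ v, one has ⟨F(u) − F(v), u − v⟩ > 0. -/
/-!
For a radial map `w ↦ ψ ‖w‖ • w`, with `s = ‖u‖` and `t = ‖v‖`,
`⟪ψ s • u - ψ t • v, u - v⟫ = (s ψ s - t ψ t)(s - t) + (ψ s + ψ t)(s t - ⟪u, v⟫)`.
If `t ↦ t ψ t` is strictly increasing and `ψ ≥ 0`, both terms are nonnegative (Cauchy–Schwarz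
for the second); the first is positive when `s ≠ t`, and when `s = t` the second is
`ψ s ‖u - v‖²`. For `ψ = φ`, the derivative of `t ↦ t φ t` is `φ + t φ' ≥ c t ^ (p - 2) > 0`.
-/

open Set

open scoped RealInnerProductSpace

section RadialMap

variable {E : Type*} [NormedAddCommGroup E] [InnerProductSpace ℝ E]

theorem inner_smul_sub_smul_sub_eq (a b : ℝ) (u v : E) :
    ⟪a • u - b • v, u - v⟫ =
      (‖u‖ * a - ‖v‖ * b) * (‖u‖ - ‖v‖) + (a + b) * (‖u‖ * ‖v‖ - ⟪u, v⟫) := by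
  simp only [inner_sub_left, inner_sub_right, real_inner_smul_left, real_inner_self_eq_norm_sq,
    real_inner_comm v u]
  ring

theorem StrictMonoOn.mul_sub_sub_pos {f : ℝ → ℝ} {s : Set ℝ} (hf : StrictMonoOn f s) {x y : ℝ}
    (hx : x ∈ s) (hy : y ∈ s) (hxy : x ≠ y) : 0 < (f x - f y) * (x - y) := by
  rcases hxy.lt_or_gt with h | h
  · exact mul_pos_of_neg_of_neg (sub_neg.2 (hf hx hy h)) (sub_neg.2 h)
  · exact mul_pos (sub_pos.2 (hf hy hx h)) (sub_pos.2 h)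

theorem inner_smul_norm_sub_smul_norm_pos {ψ : ℝ → ℝ} (hψ0 : 0 ≤ ψ 0)
    (hmono : StrictMonoOn (fun t => t * ψ t) (Ici 0)) {u v : E} (huv : u ≠ v) :
    0 < ⟪ψ ‖u‖ • u - ψ ‖v‖ • v, u - v⟫ := by
  have hψ_pos : ∀ t > 0, 0 < ψ t := fun t ht =>
    pos_of_mul_pos_right (by simpa using hmono self_mem_Ici ht.le ht) ht.le
  have hψ_nonneg : ∀ t ≥ 0, 0 ≤ ψ t := fun t ht =>
    ht.eq_or_lt.elim (fun h => h ▸ hψ0) fun h => (hψ_pos t h).le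
  rw [inner_smul_sub_smul_sub_eq]
  by_cases hnorm : ‖u‖ = ‖v‖
  · have hsq : ‖u - v‖ ^ 2 = ‖u‖ ^ 2 - 2 * ⟪u, v⟫ + ‖v‖ ^ 2 := norm_sub_sq_real u v
    have hdiff : 0 < ‖u - v‖ := norm_pos_iff.2 (sub_ne_zero.2 huv)
    have hu : 0 < ‖u‖ := (norm_nonneg u).lt_of_ne fun h => huv <| by
      rw [norm_eq_zero.1 h.symm, norm_eq_zero.1 (hnorm.symm.trans h.symm)]
    rw [← hnorm] at hsq ⊢
    have hgap : 0 < ‖u‖ * ‖u‖ - ⟪u, v⟫ := by nlinarith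
    simp only [sub_self, mul_zero, zero_add]
    exact mul_pos (add_pos (hψ_pos _ hu) (hψ_pos _ hu)) hgap
  · exact add_pos_of_pos_of_nonneg (hmono.mul_sub_sub_pos (norm_nonneg u) (norm_nonneg v) hnorm)
      (mul_nonneg (add_nonneg (hψ_nonneg _ (norm_nonneg u)) (hψ_nonneg _ (norm_nonneg v)))
        (sub_nonneg.2 (real_inner_le_norm u v)))

end RadialMap

theorem strictMonoOn_Ioi_id_mul_of_hasDerivAt {φ φ' : ℝ → ℝ}
    (hderiv : ∀ ξ > (0 : ℝ), HasDerivAt φ (φ' ξ) ξ) (hpos : ∀ ξ > (0 : ℝ), 0 < φ ξ + ξ * φ' ξ) :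
    StrictMonoOn (fun t => t * φ t) (Ioi 0) := by
  have hd : ∀ ξ > (0 : ℝ), HasDerivAt (fun t => t * φ t) (1 * φ ξ + ξ * φ' ξ) ξ :=
    fun ξ hξ => (hasDerivAt_id ξ).mul (hderiv ξ hξ)
  refine strictMonoOn_of_deriv_pos (convex_Ioi 0)
    (fun ξ hξ => (hd ξ hξ).continuousAt.continuousWithinAt) fun ξ hξ => ?_
  rw [interior_Ioi] at hξ
  rw [(hd ξ hξ).deriv, one_mul]
  exact hpos ξ hξ

theorem strictMonoOn_Ici_id_mul_indicator_Ioi {φ : ℝ → ℝ} (hφ : ∀ ξ > (0 : ℝ), 0 < φ ξ)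
    (hmono : StrictMonoOn (fun t => t * φ t) (Ioi 0)) :
    StrictMonoOn (fun t => t * (Ioi 0).indicator φ t) (Ici 0) := by
  intro a ha b hb hab
  have hb' : (0 : ℝ) < b := lt_of_le_of_lt ha hab
  rcases (mem_Ici.1 ha).eq_or_lt with rfl | ha'
  · simpa [indicator_of_mem (mem_Ioi.2 hb')] using mul_pos hb' (hφ b hb')
  · simpa [indicator_of_mem (mem_Ioi.2 ha'), indicator_of_mem (mem_Ioi.2 hb')] using
      hmono ha' hb' hab

theorem strict_monotonicity_F_general {N : ℕ} (p c : ℝ)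
    (hc : 0 < c) (φ φ' : ℝ → ℝ)
    (hderiv : ∀ ξ > (0 : ℝ), HasDerivAt φ (φ' ξ) ξ)
    (hφ : ∀ ξ > (0 : ℝ), c * ξ ^ (p - 2) ≤ φ ξ)
    (hφ' : ∀ ξ > (0 : ℝ), c * ξ ^ (p - 2) ≤ φ ξ + ξ * φ' ξ)
    (F : EuclideanSpace ℝ (Fin N) → EuclideanSpace ℝ (Fin N))
    (hF : ∀ v : EuclideanSpace ℝ (Fin N), v ≠ 0 → F v = φ ‖v‖ • v) (hF0 : F 0 = 0) :
    ∀ u v : EuclideanSpace ℝ (Fin N), u ≠ v →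
      0 < (inner ℝ (F u - F v) (u - v) : ℝ) := by
  have hweight : ∀ ξ > (0 : ℝ), 0 < c * ξ ^ (p - 2) := fun ξ hξ => by positivity
  have hmono := strictMonoOn_Ioi_id_mul_of_hasDerivAt hderiv fun ξ hξ =>
    (hweight ξ hξ).trans_le (hφ' ξ hξ)
  have hφ_pos : ∀ ξ > (0 : ℝ), 0 < φ ξ := fun ξ hξ => (hweight ξ hξ).trans_le (hφ ξ hξ)
  -- The value of `φ` at `0` is irrelevant to `F`, so replace it by `0`.
  have hF_radial : ∀ v, F v = (Ioi 0).indicator φ ‖v‖ • v := by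
    intro v
    rcases eq_or_ne v 0 with rfl | hv
    · simp [hF0]
    · rw [hF v hv, indicator_of_mem (mem_Ioi.2 (norm_pos_iff.2 hv))]
  intro u v huv
  rw [hF_radial u, hF_radial v]
  exact inner_smul_norm_sub_smul_norm_pos (by simp)
    (strictMonoOn_Ici_id_mul_indicator_Ioi hφ_pos hmono) huv

/-- Strict monotonicity of the vector field `F(v) = φ(|v|) v`. -/
theorem strict_monotonicity_F {N : ℕ} (hN : 1 ≤ N) (p c : ℝ)
    (hp : 1 < p) (hc : 0 < c) (φ φ' : ℝ → ℝ)
    (hderiv : ∀ ξ > (0 : ℝ), HasDerivAt φ (φ' ξ) ξ)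
    (hderivcont : ContinuousOn φ' (Set.Ioi 0))
    (hφ : ∀ ξ > (0 : ℝ), c * ξ ^ (p - 2) ≤ φ ξ)
    (hφ' : ∀ ξ > (0 : ℝ), c * ξ ^ (p - 2) ≤ φ ξ + ξ * φ' ξ)
    (F : EuclideanSpace ℝ (Fin N) → EuclideanSpace ℝ (Fin N))
    (hF : ∀ v : EuclideanSpace ℝ (Fin N), v ≠ 0 → F v = φ ‖v‖ • v) (hF0 : F 0 = 0) :
    ∀ u v : EuclideanSpace ℝ (Fin N), u ≠ v →
      0 < (inner ℝ (F u - F v) (u - v) : ℝ) :=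
  strict_monotonicity_F_general p c hc φ φ' hderiv hφ hφ' F hF hF0
end

section
/- Variable exponent Lebesgue spaces are not translation invariant: if p : ℝ^N → ℝ is continuous, nonconstant, and satisfies 1 < inf p ≤ sup p < ∞, then there exist a measurable function u : ℝ^N → ℝ and a vector h ∈ ℝ^N such that ∫_{ℝ^N} |u(x)|^{p(x)} dx < ∞ while ∫_{ℝ^N} |u(x + h)|^{p(x)} dx = ∞. -/
open MeasureTheory Set Filter Topology
open scoped ENNReal

/-!
Pick points `a`, `b` with `p a < s < t < p b`, and a small cube with corner at `a` on which `p < s`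
and whose translate to `b` has `p > t`. With `r` the distance to the corner along one coordinate,
`u = r ^ (-1/t)` on the cube has `|u| ^ p ≤ r ^ (-s/t)`, which is integrable since `s/t < 1`. The
translate `u (· + (a - b))` is the same singularity placed at `b`, where `|u| ^ p ≥ r ^ (-1)`, which
is not integrable near `r = 0`.
-/

lemma lintegral_Ioo_rpow_lt_top_iff {r δ : ℝ} (hδ : 0 < δ) :
    ∫⁻ t in Ioo 0 δ, ENNReal.ofReal (t ^ r) < ∞ ↔ -1 < r := by
  have hnonneg : 0 ≤ᵐ[volume.restrict (Ioo 0 δ)] fun t : ℝ ↦ t ^ r :=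
    ae_restrict_of_forall_mem measurableSet_Ioo fun t ht ↦ Real.rpow_nonneg ht.1.le r
  rw [← intervalIntegral.integrableOn_Ioo_rpow_iff hδ, IntegrableOn, Integrable,
    ← hasFiniteIntegral_iff_ofReal hnonneg]
  exact (and_iff_right (measurable_id.pow_const r).aestronglyMeasurable).symm

lemma lintegral_univ_pi_comp_eval {ι : Type*} [Fintype ι] [DecidableEq ι] {X : ι → Type*}
    [∀ i, MeasurableSpace (X i)] (μ : ∀ i, Measure (X i)) [∀ i, SigmaFinite (μ i)]
    (s : ∀ i, Set (X i)) (i : ι) {f : X i → ℝ≥0∞} (hf : Measurable f) :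
    ∫⁻ x in univ.pi s, f (x i) ∂Measure.pi μ =
      (∏ j ∈ Finset.univ.erase i, μ j (s j)) * ∫⁻ y in s i, f y ∂μ i := by
  rw [Measure.restrict_pi_pi, ← lintegral_map hf (measurable_pi_apply i), Measure.pi_map_eval,
    lintegral_smul_measure]
  simp

lemma abs_rpow_neg_inv_rpow {r : ℝ} (hr : 0 < r) (t e : ℝ) :
    |r ^ (-t⁻¹)| ^ e = r ^ (-(e / t)) := by
  rw [abs_of_pos (Real.rpow_pos_of_pos hr _), ← Real.rpow_mul hr.le]
  ring_nf

variable {ι : Type*}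

def cornerCube (δ : ℝ) : Set (ι → ℝ) := univ.pi fun _ ↦ Ioo 0 δ

noncomputable def cornerSingularity (c : ι → ℝ) (δ : ℝ) (i : ι) (t : ℝ) (x : ι → ℝ) : ℝ :=
  (cornerCube δ).indicator (fun y ↦ y i ^ (-t⁻¹)) (x - c)

variable {c : ι → ℝ} {δ t : ℝ} {i : ι}

lemma cornerSingularity_add_sub (a b x : ι → ℝ) :
    cornerSingularity a δ i t (x + (a - b)) = cornerSingularity b δ i t x := by
  rw [cornerSingularity, cornerSingularity, add_sub_assoc, sub_sub_cancel_left, ← sub_eq_add_neg]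

variable [Fintype ι]

lemma measurableSet_cornerCube : MeasurableSet (cornerCube δ : Set (ι → ℝ)) :=
  MeasurableSet.univ_pi fun _ ↦ measurableSet_Ioo

lemma exists_pos_forall_mem_cornerCube {P : (ι → ℝ) → Prop} (hP : ∀ᶠ y in 𝓝 0, P y) :
    ∃ δ > 0, ∀ y ∈ cornerCube δ, P y := by
  obtain ⟨δ, hδ, hball⟩ := Metric.eventually_nhds_iff_ball.mp hP
  refine ⟨δ, hδ, fun y hy ↦ hball y ?_⟩
  rw [ball_pi _ hδ]
  refine pi_mono (fun j _ ↦ ?_) hy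
  rw [Pi.zero_apply, Real.ball_eq_Ioo, zero_sub, zero_add]
  exact Ioo_subset_Ioo_left (neg_lt_zero.mpr hδ).le

lemma lintegral_cornerCube_rpow_lt_top_iff {r : ℝ} (hδ : 0 < δ) :
    ∫⁻ y in cornerCube δ, ENNReal.ofReal (y i ^ r) < ∞ ↔ -1 < r := by
  classical
  rw [cornerCube, volume_pi, lintegral_univ_pi_comp_eval (fun _ ↦ volume) (fun _ ↦ Ioo 0 δ) i
    (f := fun x ↦ ENNReal.ofReal (x ^ r)) (by fun_prop),
    ← lintegral_Ioo_rpow_lt_top_iff hδ, lt_top_iff_ne_top, lt_top_iff_ne_top]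
  simp [ENNReal.mul_eq_top, hδ]

lemma measurable_cornerSingularity : Measurable (cornerSingularity c δ i t) :=
  (((measurable_pi_apply i).pow_const _).indicator measurableSet_cornerCube).comp
    (measurable_id.sub_const c)

lemma lintegral_cornerSingularity_rpow_lt_top {p : (ι → ℝ) → ℝ} (hp : ∀ x, 0 < p x) {s : ℝ}
    (ht : 0 < t) (hst : s < t) (hδ : 0 < δ)
    (hc : ∀ y ∈ cornerCube δ, p (c + y) ≤ s ∧ y i ≤ 1) :
    ∫⁻ x, ENNReal.ofReal (|cornerSingularity c δ i t x| ^ p x) < ∞ := by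
  have hbound (x : ι → ℝ) : ENNReal.ofReal (|cornerSingularity c δ i t x| ^ p x) ≤
      (cornerCube δ).indicator (fun y ↦ ENNReal.ofReal (y i ^ (-(s / t)))) (x - c) := by
    refine le_indicator_apply (fun hx ↦ ?_) (fun hx ↦ ?_)
    · obtain ⟨hps, hi1⟩ := hc (x - c) hx
      rw [add_sub_cancel] at hps
      have hi0 : 0 < (x - c) i := (hx i (mem_univ i)).1
      rw [cornerSingularity, indicator_of_mem hx, abs_rpow_neg_inv_rpow hi0]
      exact ENNReal.ofReal_le_ofReal (Real.rpow_le_rpow_of_exponent_ge hi0 hi1 (by gcongr))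
    -- `hp` excludes the junk value `0 ^ 0 = 1` off the cube
    · rw [cornerSingularity, indicator_of_notMem hx, abs_zero, Real.zero_rpow (hp x).ne',
        ENNReal.ofReal_zero]
  calc ∫⁻ x, ENNReal.ofReal (|cornerSingularity c δ i t x| ^ p x)
      ≤ ∫⁻ x, (cornerCube δ).indicator (fun y ↦ ENNReal.ofReal (y i ^ (-(s / t)))) (x - c) :=
        lintegral_mono hbound
    _ = ∫⁻ y in cornerCube δ, ENNReal.ofReal (y i ^ (-(s / t))) := by
        rw [lintegral_sub_right_eq_self, lintegral_indicator measurableSet_cornerCube]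
    _ < ∞ := (lintegral_cornerCube_rpow_lt_top_iff hδ).mpr <| by
        rwa [neg_lt_neg_iff, div_lt_one ht]

lemma lintegral_cornerSingularity_rpow_eq_top {p : (ι → ℝ) → ℝ} (ht : 0 < t) (hδ : 0 < δ)
    (hc : ∀ y ∈ cornerCube δ, t ≤ p (c + y) ∧ y i ≤ 1) :
    ∫⁻ x, ENNReal.ofReal (|cornerSingularity c δ i t x| ^ p x) = ∞ := by
  have hbound (x : ι → ℝ) :
      (cornerCube δ).indicator (fun y ↦ ENNReal.ofReal (y i ^ (-1 : ℝ))) (x - c) ≤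
        ENNReal.ofReal (|cornerSingularity c δ i t x| ^ p x) := by
    refine indicator_apply_le' (fun hx ↦ ?_) (fun _ ↦ zero_le)
    obtain ⟨htp, hi1⟩ := hc (x - c) hx
    rw [add_sub_cancel] at htp
    have hi0 : 0 < (x - c) i := (hx i (mem_univ i)).1
    rw [cornerSingularity, indicator_of_mem hx, abs_rpow_neg_inv_rpow hi0]
    refine ENNReal.ofReal_le_ofReal (Real.rpow_le_rpow_of_exponent_ge hi0 hi1 ?_)
    rwa [neg_le_neg_iff, one_le_div ht]
  refine top_unique (le_of_eq_of_le ?_ (lintegral_mono hbound))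
  rw [lintegral_sub_right_eq_self, lintegral_indicator measurableSet_cornerCube, eq_comm,
    ← not_lt_top_iff, lintegral_cornerCube_rpow_lt_top_iff hδ]
  exact lt_irrefl _

theorem exists_lintegral_rpow_lt_top_and_translate_eq_top {p : (ι → ℝ) → ℝ}
    (hpc : Continuous p) (hp : ∀ x, 0 < p x) {a b : ι → ℝ} (hab : p a < p b) :
    ∃ u : (ι → ℝ) → ℝ, ∃ h : ι → ℝ, Measurable u ∧
      (∫⁻ x, ENNReal.ofReal (|u x| ^ p x)) < ⊤ ∧
      (∫⁻ x, ENNReal.ofReal (|u (x + h)| ^ p x)) = ⊤ := by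
  obtain ⟨i, -⟩ : ∃ i, a i ≠ b i := Function.ne_iff.mp (ne_of_apply_ne p hab.ne)
  obtain ⟨s, has, hsb⟩ := exists_between hab
  obtain ⟨t, hst, htb⟩ := exists_between hsb
  have ht : 0 < t := (hp a).trans (has.trans hst)
  have hcont (c : ι → ℝ) : Continuous fun y ↦ p (c + y) := hpc.comp (continuous_const_add c)
  have hnear : ∀ᶠ y in 𝓝 (0 : ι → ℝ), p (a + y) < s ∧ t < p (b + y) ∧ y i < 1 :=
    ((hcont a).continuousAt.eventually_lt continuousAt_const (by simpa using has)).and <|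
      (continuousAt_const.eventually_lt (hcont b).continuousAt (by simpa using htb)).and <|
        (continuous_apply i).continuousAt.eventually_lt continuousAt_const (by simp)
  obtain ⟨δ, hδ, hcube⟩ := exists_pos_forall_mem_cornerCube hnear
  refine ⟨cornerSingularity a δ i t, a - b, measurable_cornerSingularity, ?_, ?_⟩
  · exact lintegral_cornerSingularity_rpow_lt_top hp ht hst hδ fun y hy ↦
      ⟨(hcube y hy).1.le, (hcube y hy).2.2.le⟩
  · simp_rw [cornerSingularity_add_sub]
    exact lintegral_cornerSingularity_rpow_eq_top ht hδ fun y hy ↦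
      ⟨(hcube y hy).2.1.le, (hcube y hy).2.2.le⟩

/-- Variable exponent Lebesgue spaces are not translation invariant. -/
theorem variable_exponent_not_translation_invariant {N : ℕ}
    (p : (Fin N → ℝ) → ℝ) (hpc : Continuous p)
    (hpnc : ∃ x y : Fin N → ℝ, p x ≠ p y)
    (m M : ℝ) (hm : 1 < m) (hpb : ∀ x, m ≤ p x ∧ p x ≤ M) :
    ∃ u : (Fin N → ℝ) → ℝ, ∃ h : Fin N → ℝ, Measurable u ∧
      (∫⁻ x, ENNReal.ofReal (|u x| ^ p x)) < ⊤ ∧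
      (∫⁻ x, ENNReal.ofReal (|u (x + h)| ^ p x)) = ⊤ := by
  obtain ⟨x, y, hxy⟩ := hpnc
  have hp (z : Fin N → ℝ) : 0 < p z := (zero_lt_one.trans hm).trans_le (hpb z).1
  rcases hxy.lt_or_gt with hlt | hlt
  · exact exists_lintegral_rpow_lt_top_and_translate_eq_top hpc hp hlt
  · exact exists_lintegral_rpow_lt_top_and_translate_eq_top hpc hp hlt
end
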